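/- arXiv:2402.03232 — 8 statements merged into one kernel-verified Lean document; each statement's English description precedes it below -/
import Mathlib

section
/- Let ρ_j : ℝ^d × ℝ^d → [0,∞) be a measurable joint probability density of a pair (x₁, x) and let ρ_m(x) = ∫ ρ_j(x₁, x) dx₁ be the marginal density of x. Let w : ℝ^d × ℝ^d → ℝ^d be measurable with ∫∫ ‖w(x₁,x)‖² ρ_j(x₁,x) dx₁ dx < ∞, and define v*(x) = (∫ w(x₁,x) ρ_j(x₁,x) dx₁) / ρ_m(x) at every x with ρ_m(x) > 0. Then for every measurable u : ℝ^d → ℝ^d with ∫ ‖u(x)‖² ρ_m(x) dx < ∞, one has ∫∫ ‖u(x) − w(x₁,x)‖² ρ_j(x₁,x) dx₁ dx − ∫ ‖u(x) − v*(x)‖² ρ_m(x) dx = ∫∫ ‖w(x₁,x)‖² ρ_j(x₁,x) dx₁ dx − ∫ ‖v*(x)‖² ρ_m(x) dx. In particular, the difference between the conditional flow-matching objective L_CFM(u) = ∫∫ ‖u(x) − w(x₁,x)‖² ρ_j dx₁ dx and the explicit flow-matching objective L_ExFM(u) = ∫ ‖u(x) − v*(x)‖² ρ_m dx does not depend on u,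 so the two objectives have identical gradients with respect to any parametrization of u. -/
open MeasureTheory
open scoped RealInnerProductSpace

/-!
Fix `x` and write `m = ∫ ρ(·, x)`. Then `m • v(x) = ∫ ρ(·, x) • w(·, x)`: for `m > 0` this is the
definition of `v`, and for `m = 0` both sides vanish because `ρ(·, x) = 0` a.e. Expanding the
square gives the bias–variance decomposition
`∫ ‖c - w‖² ρ = ‖c - v‖² m + (∫ ‖w‖² ρ - ‖v‖² m)` for every `c`,
so the two losses differ pointwise in `x` by a term free of `u`. Taking `c = v` gives
`‖v‖² m ≤ ∫ ‖w‖² ρ`, which makes every term integrable, so the identity integrates over `x`.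
-/

variable {α β E : Type*} [MeasurableSpace α] [MeasurableSpace β] {μ : Measure α} {ν : Measure β}

section Normed

variable [NormedAddCommGroup E] [NormedSpace ℝ E]

lemma MeasureTheory.Integrable.smul_of_norm_sq_mul {ρ : α → ℝ} {f : α → E} (hρ0 : ∀ a, 0 ≤ ρ a)
    (hρ : Integrable ρ μ) (hf : AEStronglyMeasurable f μ)
    (hf2 : Integrable (fun a => ‖f a‖ ^ 2 * ρ a) μ) :
    Integrable (fun a => ρ a • f a) μ := by
  refine Integrable.mono' (g := fun a => ρ a + ‖f a‖ ^ 2 * ρ a) (hρ.add hf2)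
    (hρ.aestronglyMeasurable.smul hf) (ae_of_all _ fun a => ?_)
  have hρa := hρ0 a
  rw [norm_smul, Real.norm_of_nonneg hρa]
  nlinarith [mul_nonneg hρa (sq_nonneg (‖f a‖ - 1))]

lemma integral_smul_eq_zero_of_integral_eq_zero {ρ : α → ℝ} (f : α → E) (hρ0 : ∀ a, 0 ≤ ρ a)
    (hρ : Integrable ρ μ) (h : ∫ a, ρ a ∂μ = 0) : ∫ a, ρ a • f a ∂μ = 0 := by
  have hρ_ae : ρ =ᵐ[μ] 0 := (integral_eq_zero_iff_of_nonneg hρ0 hρ).mp h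
  exact integral_eq_zero_of_ae (hρ_ae.mono fun a ha => by simp [ha])

lemma ae_integral_smul_eq_integral_smul [SFinite μ] [SFinite ν] {ρ : α × β → ℝ}
    {f : α × β → E} {v : β → E} (hρ0 : ∀ p, 0 ≤ ρ p) (hρ : Integrable ρ (μ.prod ν))
    (hv : ∀ y, 0 < ∫ x, ρ (x, y) ∂μ →
      v y = (∫ x, ρ (x, y) ∂μ)⁻¹ • ∫ x, ρ (x, y) • f (x, y) ∂μ) :
    ∀ᵐ y ∂ν, (∫ x, ρ (x, y) ∂μ) • v y = ∫ x, ρ (x, y) • f (x, y) ∂μ := by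
  filter_upwards [hρ.prod_left_ae] with y hy
  have hm0 : 0 ≤ ∫ x, ρ (x, y) ∂μ := integral_nonneg fun x => hρ0 (x, y)
  rcases hm0.eq_or_lt with h | h
  · rw [← h, zero_smul, integral_smul_eq_zero_of_integral_eq_zero _ (fun x => hρ0 _) hy h.symm]
  · rw [hv y h, smul_inv_smul₀ h.ne']

lemma aestronglyMeasurable_norm_sub_sq_mul {m : β → ℝ} {c v W : β → E} (hm0 : ∀ y, 0 ≤ m y)
    (hm : AEStronglyMeasurable m ν) (hW : AEStronglyMeasurable W ν)
    (hc : AEStronglyMeasurable c ν) (hv : ∀ y, 0 < m y → v y = (m y)⁻¹ • W y) :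
    AEStronglyMeasurable (fun y => ‖c y - v y‖ ^ 2 * m y) ν := by
  have heq : (fun y => ‖c y - (m y)⁻¹ • W y‖ ^ 2 * m y) = fun y => ‖c y - v y‖ ^ 2 * m y := by
    funext y
    rcases (hm0 y).eq_or_lt with h | h
    · simp [← h]
    · rw [hv y h]
  exact heq ▸ ((hc.sub (hm.aemeasurable.inv.aestronglyMeasurable.smul hW)).norm.pow 2).mul hm

end Normed

section InnerProduct

variable [NormedAddCommGroup E] [InnerProductSpace ℝ E] [CompleteSpace E]

section Slice

variable {ρ : α → ℝ} {f : α → E}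

lemma integral_norm_sub_sq_mul (hρ : Integrable ρ μ) (hρf : Integrable (fun a => ρ a • f a) μ)
    (hf2 : Integrable (fun a => ‖f a‖ ^ 2 * ρ a) μ) (c : E) :
    ∫ a, ‖c - f a‖ ^ 2 * ρ a ∂μ =
      ‖c‖ ^ 2 * ∫ a, ρ a ∂μ - 2 * ⟪c, ∫ a, ρ a • f a ∂μ⟫ + ∫ a, ‖f a‖ ^ 2 * ρ a ∂μ := by
  have hexpand : (fun a => ‖c - f a‖ ^ 2 * ρ a) =
      fun a => (‖c‖ ^ 2 * ρ a - 2 * ⟪c, ρ a • f a⟫) + ‖f a‖ ^ 2 * ρ a := by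
    funext a
    rw [norm_sub_sq_real, real_inner_smul_right]
    ring
  have hcross : Integrable (fun a => 2 * ⟪c, ρ a • f a⟫) μ := (hρf.const_inner c).const_mul 2
  have hmain : Integrable (fun a => ‖c‖ ^ 2 * ρ a - 2 * ⟪c, ρ a • f a⟫) μ :=
    (hρ.const_mul _).sub hcross
  rw [hexpand, integral_add hmain hf2, integral_sub (hρ.const_mul _) hcross, integral_const_mul,
    integral_const_mul, integral_inner hρf]

lemma integral_norm_sub_sq_mul_of_smul_eq (hρ : Integrable ρ μ)
    (hρf : Integrable (fun a => ρ a • f a) μ) (hf2 : Integrable (fun a => ‖f a‖ ^ 2 * ρ a) μ)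
    {v : E} (hv : (∫ a, ρ a ∂μ) • v = ∫ a, ρ a • f a ∂μ) (c : E) :
    ∫ a, ‖c - f a‖ ^ 2 * ρ a ∂μ =
      ‖c - v‖ ^ 2 * ∫ a, ρ a ∂μ + (∫ a, ‖f a‖ ^ 2 * ρ a ∂μ - ‖v‖ ^ 2 * ∫ a, ρ a ∂μ) := by
  rw [integral_norm_sub_sq_mul hρ hρf hf2, ← hv, real_inner_smul_right, norm_sub_sq_real]
  ring

end Slice

section Marginal

variable [SFinite μ] [SFinite ν] {ρ : α × β → ℝ} {f : α × β → E} {v : β → E}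
  (hρ0 : ∀ p, 0 ≤ ρ p) (hρ : Integrable ρ (μ.prod ν)) (hf : AEStronglyMeasurable f (μ.prod ν))
  (hf2 : Integrable (fun p => ‖f p‖ ^ 2 * ρ p) (μ.prod ν))
  (hv : ∀ y, 0 < ∫ x, ρ (x, y) ∂μ →
      v y = (∫ x, ρ (x, y) ∂μ)⁻¹ • ∫ x, ρ (x, y) • f (x, y) ∂μ)
include hρ0 hρ hf hf2 hv

lemma ae_integral_norm_sub_sq_mul_eq (c : β → E) :
    ∀ᵐ y ∂ν, ∫ x, ‖c y - f (x, y)‖ ^ 2 * ρ (x, y) ∂μ =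
      ‖c y - v y‖ ^ 2 * (∫ x, ρ (x, y) ∂μ) +
        (∫ x, ‖f (x, y)‖ ^ 2 * ρ (x, y) ∂μ - ‖v y‖ ^ 2 * ∫ x, ρ (x, y) ∂μ) := by
  have hρf := hρ.smul_of_norm_sq_mul hρ0 hf hf2
  filter_upwards [ae_integral_smul_eq_integral_smul hρ0 hρ hv, hρ.prod_left_ae,
    hρf.prod_left_ae, hf2.prod_left_ae] with y hvy h1 h2 h3
  exact integral_norm_sub_sq_mul_of_smul_eq h1 h2 h3 hvy (c y)

lemma integrable_norm_sq_mul_integral :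
    Integrable (fun y => ‖v y‖ ^ 2 * ∫ x, ρ (x, y) ∂μ) ν := by
  have hρf := hρ.smul_of_norm_sq_mul hρ0 hf hf2
  have hmeas := aestronglyMeasurable_norm_sub_sq_mul (fun y => integral_nonneg fun x => hρ0 (x, y))
    hρ.integral_prod_right.aestronglyMeasurable hρf.integral_prod_right.aestronglyMeasurable
    aestronglyMeasurable_const hv (c := 0)
  simp only [Pi.zero_apply, zero_sub, norm_neg] at hmeas
  refine hf2.integral_prod_right.mono' hmeas ?_
  -- the decomposition centred at `v` itself has a nonnegative left-hand side
  filter_upwards [ae_integral_norm_sub_sq_mul_eq hρ0 hρ hf hf2 hv v] with y hy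
  have hlhs : 0 ≤ ∫ x, ‖v y - f (x, y)‖ ^ 2 * ρ (x, y) ∂μ :=
    integral_nonneg fun x => mul_nonneg (sq_nonneg _) (hρ0 _)
  rw [sub_self, norm_zero] at hy
  rw [Real.norm_of_nonneg (mul_nonneg (sq_nonneg _) (integral_nonneg fun x => hρ0 (x, y)))]
  linarith

lemma integrable_norm_sub_sq_mul_integral {c : β → E} (hc : AEStronglyMeasurable c ν)
    (hc2 : Integrable (fun y => ‖c y‖ ^ 2 * ∫ x, ρ (x, y) ∂μ) ν) :
    Integrable (fun y => ‖c y - v y‖ ^ 2 * ∫ x, ρ (x, y) ∂μ) ν := by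
  have hρf := hρ.smul_of_norm_sq_mul hρ0 hf hf2
  have hmeas := aestronglyMeasurable_norm_sub_sq_mul (fun y => integral_nonneg fun x => hρ0 (x, y))
    hρ.integral_prod_right.aestronglyMeasurable hρf.integral_prod_right.aestronglyMeasurable hc hv
  refine ((hc2.const_mul 2).add
    ((integrable_norm_sq_mul_integral hρ0 hρ hf hf2 hv).const_mul 2)).mono' hmeas
    (ae_of_all _ fun y => ?_)
  have hm0 : 0 ≤ ∫ x, ρ (x, y) ∂μ := integral_nonneg fun x => hρ0 (x, y)
  have hsq : ‖c y - v y‖ ^ 2 ≤ 2 * ‖c y‖ ^ 2 + 2 * ‖v y‖ ^ 2 := by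
    nlinarith [norm_sub_le (c y) (v y), norm_nonneg (c y - v y), sq_nonneg (‖c y‖ - ‖v y‖)]
  rw [Pi.add_apply, Real.norm_of_nonneg (mul_nonneg (sq_nonneg _) hm0)]
  nlinarith [mul_le_mul_of_nonneg_right hsq hm0]

theorem integral_integral_norm_sub_sq_sub_integral_norm_sub_sq {c : β → E}
    (hc : AEStronglyMeasurable c ν) (hc2 : Integrable (fun y => ‖c y‖ ^ 2 * ∫ x, ρ (x, y) ∂μ) ν) :
    (∫ y, ∫ x, ‖c y - f (x, y)‖ ^ 2 * ρ (x, y) ∂μ ∂ν) -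
        ∫ y, ‖c y - v y‖ ^ 2 * (∫ x, ρ (x, y) ∂μ) ∂ν =
      (∫ y, ∫ x, ‖f (x, y)‖ ^ 2 * ρ (x, y) ∂μ ∂ν) - ∫ y, ‖v y‖ ^ 2 * (∫ x, ρ (x, y) ∂μ) ∂ν := by
  have hG := hf2.integral_prod_right
  have hV := integrable_norm_sq_mul_integral hρ0 hρ hf hf2 hv
  have hGV : Integrable (fun y =>
      (∫ x, ‖f (x, y)‖ ^ 2 * ρ (x, y) ∂μ) - ‖v y‖ ^ 2 * ∫ x, ρ (x, y) ∂μ) ν := hG.sub hV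
  rw [integral_congr_ae (ae_integral_norm_sub_sq_mul_eq hρ0 hρ hf hf2 hv c),
    integral_add (integrable_norm_sub_sq_mul_integral hρ0 hρ hf hf2 hv hc hc2) hGV,
    integral_sub hG hV]
  ring

end Marginal

end InnerProduct

theorem exfm_cfm_loss_difference_independent_of_u_general {d : ℕ}
    (ρj : EuclideanSpace ℝ (Fin d) × EuclideanSpace ℝ (Fin d) → ℝ)
    (hρj_nonneg : ∀ p, 0 ≤ ρj p)
    (hρj_prob : ∫ p, ρj p = 1)
    (ρm : EuclideanSpace ℝ (Fin d) → ℝ)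
    (hρm : ∀ x, ρm x = ∫ x₁, ρj (x₁, x))
    (w : EuclideanSpace ℝ (Fin d) × EuclideanSpace ℝ (Fin d) → EuclideanSpace ℝ (Fin d))
    (hw_meas : Measurable w)
    (hw_int : Integrable (fun p => ‖w p‖ ^ 2 * ρj p))
    (v : EuclideanSpace ℝ (Fin d) → EuclideanSpace ℝ (Fin d))
    (hv : ∀ x, 0 < ρm x → v x = (ρm x)⁻¹ • ∫ x₁, ρj (x₁, x) • w (x₁, x))
    (u : EuclideanSpace ℝ (Fin d) → EuclideanSpace ℝ (Fin d))
    (hu_meas : Measurable u)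
    (hu_int : Integrable (fun x => ‖u x‖ ^ 2 * ρm x)) :
    (∫ x, ∫ x₁, ‖u x - w (x₁, x)‖ ^ 2 * ρj (x₁, x)) -
      (∫ x, ‖u x - v x‖ ^ 2 * ρm x) =
    (∫ x, ∫ x₁, ‖w (x₁, x)‖ ^ 2 * ρj (x₁, x)) -
      (∫ x, ‖v x‖ ^ 2 * ρm x) := by
  obtain rfl : ρm = fun x => ∫ x₁, ρj (x₁, x) := funext hρm
  exact integral_integral_norm_sub_sq_sub_integral_norm_sub_sq hρj_nonneg
    (integrable_of_integral_eq_one hρj_prob) hw_meas.aestronglyMeasurable hw_int hv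
    hu_meas.aestronglyMeasurable hu_int

/-- Theorem 1 (equality of gradients of the CFM and ExFM losses): the difference
between the two objectives does not depend on the model `u`. -/
theorem exfm_cfm_loss_difference_independent_of_u {d : ℕ}
    (ρj : EuclideanSpace ℝ (Fin d) × EuclideanSpace ℝ (Fin d) → ℝ)
    (hρj_meas : Measurable ρj) (hρj_nonneg : ∀ p, 0 ≤ ρj p)
    (hρj_prob : ∫ p, ρj p = 1)
    (ρm : EuclideanSpace ℝ (Fin d) → ℝ)
    (hρm : ∀ x, ρm x = ∫ x₁, ρj (x₁, x))
    (w : EuclideanSpace ℝ (Fin d) × EuclideanSpace ℝ (Fin d) → EuclideanSpace ℝ (Fin d))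
    (hw_meas : Measurable w)
    (hw_int : Integrable (fun p => ‖w p‖ ^ 2 * ρj p))
    (v : EuclideanSpace ℝ (Fin d) → EuclideanSpace ℝ (Fin d))
    (hv : ∀ x, 0 < ρm x → v x = (ρm x)⁻¹ • ∫ x₁, ρj (x₁, x) • w (x₁, x))
    (u : EuclideanSpace ℝ (Fin d) → EuclideanSpace ℝ (Fin d))
    (hu_meas : Measurable u)
    (hu_int : Integrable (fun x => ‖u x‖ ^ 2 * ρm x)) :
    (∫ x, ∫ x₁, ‖u x - w (x₁, x)‖ ^ 2 * ρj (x₁, x)) -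
      (∫ x, ‖u x - v x‖ ^ 2 * ρm x) =
    (∫ x, ∫ x₁, ‖w (x₁, x)‖ ^ 2 * ρj (x₁, x)) -
      (∫ x, ‖v x‖ ^ 2 * ρm x) :=
  exfm_cfm_loss_difference_independent_of_u_general ρj hρj_nonneg hρj_prob ρm hρm w hw_meas hw_int v
    hv u hu_meas hu_int
end

section
/- Let ρ₀ be a bounded, everywhere strictly positive probability density on ℝ^d with finite first moment, and let ρ₁ be a bounded continuous probability density on ℝ^d with finite first moment. For σ_s > 0 define the regularized vector field v_{σ_s}(x,t) = [∫ (x₁ − x(1−σ_s)) ρ₀((x − t x₁)/(1 + σ_s t − t)) ρ₁(x₁) dx₁] / [(1 + σ_s t − t) ∫ ρ₀((x − t x₁)/(1 + σ_s t − t)) ρ₁(x₁) dx₁]. Then for every x ∈ ℝ^d: (i) for every t ∈ [0,1), lim_{σ_s → 0⁺} v_{σ_s}(x,t) = [∫ (x₁ − x) ρ₀((x − t x₁)/(1−t)) ρ₁(x₁) dx₁] / [(1−t) ∫ ρ₀((x − t x₁)/(1−t)) ρ₁(x₁) dx₁]; and (ii) if moreover ρ₁(x) > 0, then lim_{σ_s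 → 0⁺} v_{σ_s}(x,1) = x − ∫ x₀ ρ₀(x₀) dx₀. -/
/-!
For `t ≠ 0` substitute `x₁ = t⁻¹ (x - c x₀)` with `c = 1 + σ t - t`: the integrand
`x₁ - (1 - σ) x` becomes `(c / t) (x - x₀)`, so the field is `t⁻¹ E[x - x₀ | c x₀ + t x₁ = x]`,
and now only the continuous bounded density `ρ₁` depends on `σ`. By dominated convergence
(`ρ₀` has a first moment) this conditional mean is continuous in `c` wherever its normalising
integral `∫ ρ₀(y) ρ₁(t⁻¹ (x - c y)) dy` is nonzero. For `t < 1` the limit `c = 1 - t` is positive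
and the integral is positive because `ρ₀ > 0`; for `t = 1` we have `c = σ → 0`, the integral
tends to `ρ₁(x) > 0`, and the conditional mean tends to `x - E[x₀]`. At `t = 0` the field is
affine in `σ`.
-/

open MeasureTheory Filter

variable {V : Type*} [NormedAddCommGroup V] [NormedSpace ℝ V]
  {X F : Type*} [TopologicalSpace X] [MeasurableSpace X] [OpensMeasurableSpace X]
  [TopologicalSpace F]

theorem integral_mul_comp_pos {μ : Measure X} [μ.IsOpenPosMeasure] {f : X → ℝ}
    (hf : ∀ y, 0 < f y) (hfi : Integrable f μ) {g : F → ℝ} (hg : Continuous g)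
    (hg0 : ∀ z, 0 ≤ g z) {C : ℝ} (hgC : ∀ z, ‖g z‖ ≤ C) {A : X → F} (hA : Continuous A) {y₀ : X} (hy₀ : 0 < g (A y₀)) :
    0 < ∫ y, f y * g (A y) ∂μ := by
  have hint : Integrable (fun y => f y * g (A y)) μ :=
    hfi.mul_bdd (hg.comp hA).aestronglyMeasurable (Eventually.of_forall fun y => hgC (A y))
  rw [integral_pos_iff_support_of_nonneg (fun y => mul_nonneg (hf y).le (hg0 _)) hint]
  exact ((isOpen_lt continuous_const (hg.comp hA)).measure_pos μ ⟨y₀, hy₀⟩).trans_le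
    (measure_mono fun y hy => (mul_pos (hf y) hy).ne')

theorem continuous_integral_mul_comp_smul {μ : Measure X} (f : X → ℝ) (h : X → V)
    (hfh : Integrable (fun y => f y • h y) μ)
    {g : F → ℝ} (hg : Continuous g) {C : ℝ} (hgC : ∀ z, ‖g z‖ ≤ C) {A : ℝ → X → F}
    (hA : Continuous (Function.uncurry A)) :
    Continuous fun c => ∫ y, (f y * g (A c y)) • h y ∂μ := by
  have hcomm : ∀ c y, (f y * g (A c y)) • h y = g (A c y) • (f y • h y) := fun c y => by
    rw [mul_comm, mul_smul]
  simp_rw [hcomm]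
  refine continuous_of_dominated (bound := fun y => C * ‖f y • h y‖)
    (fun c => ?_) (fun c => Eventually.of_forall fun y => ?_) (hfh.norm.const_mul C)
    (Eventually.of_forall fun y => ?_)
  · exact (hg.comp (hA.comp (Continuous.prodMk_right c))).aestronglyMeasurable.smul
      hfh.aestronglyMeasurable
  · rw [norm_smul]
    exact mul_le_mul_of_nonneg_right (hgC _) (norm_nonneg _)
  · exact (hg.comp (hA.comp (Continuous.prodMk_left y))).smul continuous_const

variable {E : Type*} [NormedAddCommGroup E] [NormedSpace ℝ E] [MeasurableSpace E]

theorem integral_comp_inv_smul_sub_smul [BorelSpace E] [FiniteDimensional ℝ E]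
    (μ : Measure E) [μ.IsAddHaarMeasure] (f : E → E → V) {c t : ℝ} (hc : c ≠ 0)
    (ht : t ≠ 0) (x : E) :
    ∫ x₁, f (c⁻¹ • (x - t • x₁)) x₁ ∂μ =
      |c / t| ^ Module.finrank ℝ E • ∫ y, f y (t⁻¹ • (x - c • y)) ∂μ := by
  set G : E → V := fun y => f y (t⁻¹ • (x - c • y))
  have hG : ∀ x₁, f (c⁻¹ • (x - t • x₁)) x₁ = G ((-(c⁻¹ * t)) • x₁ + c⁻¹ • x) := by
    intro x₁
    rw [show (-(c⁻¹ * t)) • x₁ + c⁻¹ • x = c⁻¹ • (x - t • x₁) by module]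
    simp only [G, smul_inv_smul₀ hc, sub_sub_cancel, inv_smul_smul₀ ht]
  simp_rw [hG]
  rw [Measure.integral_comp_smul μ (fun y => G (y + c⁻¹ • x)), integral_add_right_eq_self G]
  congr 1
  rw [abs_inv, abs_pow, abs_neg, ← inv_pow, ← abs_inv, mul_inv, inv_inv, div_eq_mul_inv,
    mul_comm]

/-- `E[x - x₀ | c x₀ + t x₁ = x]` for independent `x₀ ∼ ρ₀` and `x₁ ∼ ρ₁`. -/
noncomputable def condMeanDisplacement (μ : Measure E) (ρ0 ρ1 : E → ℝ) (t c : ℝ) (x : E) :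
    E :=
  (∫ y, ρ0 y * ρ1 (t⁻¹ • (x - c • y)) ∂μ)⁻¹ •
    ∫ y, (ρ0 y * ρ1 (t⁻¹ • (x - c • y))) • (x - y) ∂μ

theorem continuousAt_condMeanDisplacement [OpensMeasurableSpace E] {μ : Measure E}
    {ρ0 ρ1 : E → ℝ} (hρ0 : Integrable ρ0 μ) (hmom : Integrable (fun y => ρ0 y • y) μ)
    (hρ1 : Continuous ρ1) {C : ℝ} (hC : ∀ z, ‖ρ1 z‖ ≤ C) (t : ℝ) (x : E) {c₀ : ℝ}
    (hD : ∫ y, ρ0 y * ρ1 (t⁻¹ • (x - c₀ • y)) ∂μ ≠ 0) :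
    ContinuousAt (fun c => condMeanDisplacement μ ρ0 ρ1 t c x) c₀ := by
  have hA : Continuous (Function.uncurry fun (c : ℝ) (y : E) => t⁻¹ • (x - c • y)) := by
    fun_prop
  have hden := continuous_integral_mul_comp_smul ρ0 (fun _ => (1 : ℝ))
    (by simpa only [smul_eq_mul, mul_one] using hρ0) hρ1 hC hA
  simp only [smul_eq_mul, mul_one] at hden
  have hnum := continuous_integral_mul_comp_smul ρ0 (fun y => x - y)
    (by simp_rw [smul_sub]; exact (hρ0.smul_const x).sub hmom) hρ1 hC hA
  exact (hden.continuousAt.inv₀ hD).smul hnum.continuousAt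

theorem condMeanDisplacement_zero [CompleteSpace E] {μ : Measure E} {ρ0 ρ1 : E → ℝ}
    (hρ0 : Integrable ρ0 μ) (hprob : ∫ y, ρ0 y ∂μ = 1) (hmom : Integrable (fun y => ρ0 y • y) μ)
    (t : ℝ) {x : E} (hx : ρ1 (t⁻¹ • x) ≠ 0) :
    condMeanDisplacement μ ρ0 ρ1 t 0 x = x - ∫ y, ρ0 y • y ∂μ := by
  simp only [condMeanDisplacement, zero_smul, sub_zero]
  simp_rw [mul_comm (ρ0 _), mul_smul]
  rw [integral_const_mul, hprob, mul_one, integral_smul, inv_smul_smul₀ hx]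
  simp_rw [smul_sub]
  rw [integral_sub (hρ0.smul_const x) hmom, integral_smul_const, hprob, one_smul]

noncomputable def regularizedField (μ : Measure E) (ρ0 ρ1 : E → ℝ) (σ t : ℝ) (x : E) : E :=
  ((1 + σ * t - t) * ∫ x₁, ρ0 ((1 + σ * t - t)⁻¹ • (x - t • x₁)) * ρ1 x₁ ∂μ)⁻¹ •
    ∫ x₁, (ρ0 ((1 + σ * t - t)⁻¹ • (x - t • x₁)) * ρ1 x₁) • (x₁ - (1 - σ) • x) ∂μ

theorem continuous_regularizedField_time_zero [CompleteSpace E] {μ : Measure E}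
    (ρ0 : E → ℝ) {ρ1 : E → ℝ} (hρ1 : Integrable ρ1 μ)
    (hmom : Integrable (fun y => ρ1 y • y) μ) (x : E) :
    Continuous fun σ => regularizedField μ ρ0 ρ1 σ 0 x := by
  have hw : Integrable (fun x₁ => ρ0 x * ρ1 x₁) μ := hρ1.const_mul _
  have hwy : Integrable (fun x₁ => (ρ0 x * ρ1 x₁) • x₁) μ := by
    simp_rw [mul_smul]; exact hmom.smul (ρ0 x)
  have hsplit : ∀ σ : ℝ, ∫ x₁, (ρ0 x * ρ1 x₁) • (x₁ - (1 - σ) • x) ∂μ =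
      (∫ x₁, (ρ0 x * ρ1 x₁) • x₁ ∂μ) - (1 - σ) • ∫ x₁, (ρ0 x * ρ1 x₁) • x ∂μ := fun σ => by
    simp_rw [smul_sub, smul_comm _ (1 - σ)]
    have hwx : Integrable (fun x₁ => (1 - σ) • (ρ0 x * ρ1 x₁) • x) μ :=
      (hw.smul_const x).smul _
    rw [integral_sub hwy hwx, integral_smul]
  simp only [regularizedField, mul_zero, add_zero, sub_zero, inv_one, one_mul, zero_smul,
    one_smul, hsplit]
  fun_prop

theorem regularizedField_eq_smul_condMeanDisplacement [BorelSpace E] [FiniteDimensional ℝ E]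
    (μ : Measure E) [μ.IsAddHaarMeasure] (ρ0 ρ1 : E → ℝ) {σ t : ℝ} (ht : t ≠ 0)
    (hc : 1 + σ * t - t ≠ 0) (x : E) :
    regularizedField μ ρ0 ρ1 σ t x =
      t⁻¹ • condMeanDisplacement μ ρ0 ρ1 t (1 + σ * t - t) x := by
  rw [regularizedField, condMeanDisplacement]
  set c := 1 + σ * t - t
  have hvel : ∀ y : E, t⁻¹ • (x - c • y) - (1 - σ) • x = (c / t) • (x - y) := fun y => by
    match_scalars <;> field_simp; ring
  have hden := integral_comp_inv_smul_sub_smul μ (fun y x₁ => ρ0 y * ρ1 x₁) hc ht x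
  have hnum := integral_comp_inv_smul_sub_smul μ
    (fun y x₁ => (ρ0 y * ρ1 x₁) • (x₁ - (1 - σ) • x)) hc ht x
  simp only [hvel, smul_comm _ (c / t), integral_smul] at hden hnum
  rw [hden, hnum, smul_smul, smul_smul, smul_smul, smul_eq_mul]
  congr 1
  rw [mul_inv, mul_inv]
  field_simp

theorem continuousAt_regularizedField [BorelSpace E] [FiniteDimensional ℝ E]
    {μ : Measure E} [μ.IsAddHaarMeasure] {ρ0 ρ1 : E → ℝ} (hρ0pos : ∀ y, 0 < ρ0 y)
    (hρ0 : Integrable ρ0 μ) (hmom : Integrable (fun y => ρ0 y • y) μ) (hρ1 : Continuous ρ1)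
    (hρ1nonneg : ∀ z, 0 ≤ ρ1 z) {C : ℝ} (hC : ∀ z, ‖ρ1 z‖ ≤ C) {z₀ : E} (hz₀ : 0 < ρ1 z₀)
    {σ₀ t : ℝ} (ht : t ≠ 0) (hc : 1 + σ₀ * t - t ≠ 0) (x : E) :
    ContinuousAt (fun σ => regularizedField μ ρ0 ρ1 σ t x) σ₀ := by
  have hcσ : Continuous fun σ : ℝ => 1 + σ * t - t := by fun_prop
  have hD : 0 < ∫ y, ρ0 y * ρ1 (t⁻¹ • (x - (1 + σ₀ * t - t) • y)) ∂μ := by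
    refine integral_mul_comp_pos hρ0pos hρ0 hρ1 hρ1nonneg hC (by fun_prop)
      (y₀ := (1 + σ₀ * t - t)⁻¹ • (x - t • z₀)) ?_
    rwa [smul_inv_smul₀ hc, sub_sub_cancel, inv_smul_smul₀ ht]
  have hP : ContinuousAt
      (fun σ => t⁻¹ • condMeanDisplacement μ ρ0 ρ1 t (1 + σ * t - t) x) σ₀ :=
    ((continuousAt_condMeanDisplacement hρ0 hmom hρ1 hC t x hD.ne').comp
      (f := fun σ => 1 + σ * t - t) hcσ.continuousAt).const_smul t⁻¹
  exact hP.congr ((hcσ.continuousAt.eventually_ne hc).mono fun σ hσ =>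
    (regularizedField_eq_smul_condMeanDisplacement μ ρ0 ρ1 ht hσ x).symm)

theorem tendsto_regularizedField_time_one [BorelSpace E] [FiniteDimensional ℝ E]
    {μ : Measure E} [μ.IsAddHaarMeasure] {ρ0 ρ1 : E → ℝ} (hρ0 : Integrable ρ0 μ)
    (hprob : ∫ y, ρ0 y ∂μ = 1) (hmom : Integrable (fun y => ρ0 y • y) μ)
    (hρ1 : Continuous ρ1) {C : ℝ} (hC : ∀ z, ‖ρ1 z‖ ≤ C) {x : E} (hx : ρ1 x ≠ 0) :
    Tendsto (fun σ => regularizedField μ ρ0 ρ1 σ 1 x) (nhdsWithin 0 {0}ᶜ)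
      (nhds (x - ∫ y, ρ0 y • y ∂μ)) := by
  have hx' : ρ1 ((1 : ℝ)⁻¹ • x) ≠ 0 := by rwa [inv_one, one_smul]
  have hD : ∫ y, ρ0 y * ρ1 ((1 : ℝ)⁻¹ • (x - (0 : ℝ) • y)) ∂μ ≠ 0 := by
    simpa only [zero_smul, sub_zero, integral_mul_const, hprob, one_mul] using hx'
  have hP := continuousAt_condMeanDisplacement hρ0 hmom hρ1 hC 1 x hD
  rw [ContinuousAt, condMeanDisplacement_zero hρ0 hprob hmom 1 hx'] at hP
  refine (hP.mono_left nhdsWithin_le_nhds).congr' ?_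
  filter_upwards [self_mem_nhdsWithin] with σ hσ
  have hc : 1 + σ * 1 - 1 = σ := by ring
  have h := regularizedField_eq_smul_condMeanDisplacement μ ρ0 ρ1 one_ne_zero
    (hc.symm ▸ hσ) x
  rw [hc, inv_one, one_smul] at h
  exact h.symm

theorem exfm_regularized_vector_field_limits_general {d : ℕ}
    (ρ0 ρ1 : EuclideanSpace ℝ (Fin d) → ℝ)
    (h0prob : ∫ y, ρ0 y = 1)
    (h0pos : ∀ y, 0 < ρ0 y)
    (h0mom : Integrable (fun y => ρ0 y • y))
    (h1cont : Continuous ρ1) (h1bdd : ∃ C, ∀ y, ρ1 y ≤ C)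
    (h1nonneg : ∀ y, 0 ≤ ρ1 y) (h1prob : ∫ y, ρ1 y = 1)
    (h1mom : Integrable (fun y => ρ1 y • y))
    (v : ℝ → ℝ → EuclideanSpace ℝ (Fin d) → EuclideanSpace ℝ (Fin d))
    (hv : ∀ σs t x, v σs t x =
      ((1 + σs * t - t) *
          ∫ x₁, ρ0 ((1 + σs * t - t)⁻¹ • (x - t • x₁)) * ρ1 x₁)⁻¹ •
        ∫ x₁, (ρ0 ((1 + σs * t - t)⁻¹ • (x - t • x₁)) * ρ1 x₁) •
          (x₁ - (1 - σs) • x))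
    (x : EuclideanSpace ℝ (Fin d)) :
    (∀ t ∈ Set.Ico (0 : ℝ) 1,
      Tendsto (fun σs => v σs t x) (nhdsWithin 0 (Set.Ioi 0))
        (nhds
          (((1 - t) * ∫ x₁, ρ0 ((1 - t)⁻¹ • (x - t • x₁)) * ρ1 x₁)⁻¹ •
            ∫ x₁, (ρ0 ((1 - t)⁻¹ • (x - t • x₁)) * ρ1 x₁) • (x₁ - x)))) ∧
    (0 < ρ1 x →
      Tendsto (fun σs => v σs 1 x) (nhdsWithin 0 (Set.Ioi 0))
        (nhds (x - ∫ x₀, ρ0 x₀ • x₀))) := by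
  obtain rfl : v = regularizedField volume ρ0 ρ1 :=
    funext fun σ => funext fun t => funext (hv σ t)
  have h0int : Integrable ρ0 := .of_integral_ne_zero (by simp [h0prob])
  have h1int : Integrable ρ1 := .of_integral_ne_zero (by simp [h1prob])
  obtain ⟨C, hC⟩ := h1bdd
  have hρ1C : ∀ z, ‖ρ1 z‖ ≤ C := fun z => (Real.norm_of_nonneg (h1nonneg z)).trans_le (hC z)
  refine ⟨fun t ht => ?_, fun hx => ?_⟩
  · have hcont : ContinuousAt (fun σ => regularizedField volume ρ0 ρ1 σ t x) 0 := by
      rcases ht.1.eq_or_lt with rfl | ht0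
      · exact (continuous_regularizedField_time_zero ρ0 h1int h1mom x).continuousAt
      · obtain ⟨z₀, hz₀⟩ : ∃ z, 0 < ρ1 z := by
          by_contra! h
          simp [le_antisymm (h _) (h1nonneg _)] at h1prob
        exact continuousAt_regularizedField h0pos h0int h0mom h1cont h1nonneg hρ1C hz₀
          ht0.ne' (by linarith [ht.2]) x
    simpa only [regularizedField, zero_mul, add_zero, sub_zero, one_smul] using
      hcont.tendsto.mono_left nhdsWithin_le_nhds
  · exact (tendsto_regularizedField_time_one h0int h0prob h0mom h1cont hρ1C hx.ne').mono_left
      (nhdsWithin_mono _ fun _ hσ => ne_of_gt hσ)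

/-- Limits of the regularized explicit flow-matching vector field as the
regularization `σ_s → 0⁺`: for `t ∈ [0,1)` it recovers the explicit vector field
of the linear flow, and at `t = 1` (where `ρ₁(x) > 0`) it equals `x` minus the
mean of `ρ₀`. -/
theorem exfm_regularized_vector_field_limits {d : ℕ}
    (ρ0 ρ1 : EuclideanSpace ℝ (Fin d) → ℝ)
    (h0meas : Measurable ρ0) (h0nonneg : ∀ y, 0 ≤ ρ0 y) (h0prob : ∫ y, ρ0 y = 1)
    (h0bdd : ∃ C, ∀ y, ρ0 y ≤ C) (h0pos : ∀ y, 0 < ρ0 y)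
    (h0mom : Integrable (fun y => ρ0 y • y))
    (h1cont : Continuous ρ1) (h1bdd : ∃ C, ∀ y, ρ1 y ≤ C)
    (h1nonneg : ∀ y, 0 ≤ ρ1 y) (h1prob : ∫ y, ρ1 y = 1)
    (h1mom : Integrable (fun y => ρ1 y • y))
    (v : ℝ → ℝ → EuclideanSpace ℝ (Fin d) → EuclideanSpace ℝ (Fin d))
    (hv : ∀ σs t x, v σs t x =
      ((1 + σs * t - t) *
          ∫ x₁, ρ0 ((1 + σs * t - t)⁻¹ • (x - t • x₁)) * ρ1 x₁)⁻¹ •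
        ∫ x₁, (ρ0 ((1 + σs * t - t)⁻¹ • (x - t • x₁)) * ρ1 x₁) •
          (x₁ - (1 - σs) • x))
    (x : EuclideanSpace ℝ (Fin d)) :
    (∀ t ∈ Set.Ico (0 : ℝ) 1,
      Tendsto (fun σs => v σs t x) (nhdsWithin 0 (Set.Ioi 0))
        (nhds
          (((1 - t) * ∫ x₁, ρ0 ((1 - t)⁻¹ • (x - t • x₁)) * ρ1 x₁)⁻¹ •
            ∫ x₁, (ρ0 ((1 - t)⁻¹ • (x - t • x₁)) * ρ1 x₁) • (x₁ - x)))) ∧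
    (0 < ρ1 x →
      Tendsto (fun σs => v σs 1 x) (nhdsWithin 0 (Set.Ioi 0))
        (nhds (x - ∫ x₀, ρ0 x₀ • x₀))) :=
  exfm_regularized_vector_field_limits_general ρ0 ρ1 h0prob h0pos h0mom h1cont h1bdd h1nonneg h1prob
    h1mom v hv x
end

section
/- Let μ₀, μ₁ ∈ ℝ, σ₀, σ₁ > 0, t ∈ [0,1), and x ∈ ℝ. Then ∫ ((x₁ − x)/(1−t)) · N((x − t x₁)/(1−t) | μ₀, σ₀²) · N(x₁ | μ₁, σ₁²) dx₁ = (exp(−(x − μ₀(1−t) − μ₁ t)² / (2(σ₁² t² + σ₀² (1−t)²))) / √(2π)) · (1−t)(σ₁² t (x − μ₀) + σ₀² (t−1)(x − μ₁)) / (σ₁² t² + σ₀² (1−t)²)^{3/2}. -/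
open MeasureTheory Real

/-- One-dimensional Gaussian density `N(y | μ, σ²)`. -/
noncomputable def gaussDensity (μ σ y : ℝ) : ℝ :=
  (Real.sqrt (2 * Real.pi * σ ^ 2))⁻¹ * Real.exp (-(y - μ) ^ 2 / (2 * σ ^ 2))

/-!
Completing the square in `x₁`, the product of the two densities is
`exp (-(x - μ₀ (1 - t) - μ₁ t)² / (2 V)) / (2 π σ₀ σ₁)` times the unnormalised Gaussian
`exp (-a (x₁ - m)²)`, where `V = σ₁² t² + σ₀² (1 - t)²` is the variance of `(1 - t) X₀ + t X₁`,
`a = V / (2 σ₀² σ₁² (1 - t)²)` and `m` is the posterior mean of `x₁` given `x`.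
Against that Gaussian, `x₁ - x` integrates to `(m - x) √(π / a)`, since the centred odd part
contributes nothing.
-/

theorem integral_mul_exp_neg_mul_sq (b : ℝ) : ∫ u : ℝ, u * exp (-b * u ^ 2) = 0 := by
  have hodd := integral_neg_eq_self (fun u : ℝ => u * exp (-b * u ^ 2)) volume
  simp only [neg_sq, neg_mul, integral_neg] at hodd ⊢
  linarith

theorem integral_sub_mul_exp_neg_mul_sq_sub {b : ℝ} (hb : 0 < b) (m c : ℝ) :
    ∫ y : ℝ, (y - c) * exp (-b * (y - m) ^ 2) = (m - c) * √(π / b) := by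
  have hshift := integral_sub_right_eq_self (μ := volume)
    (fun u : ℝ => (u + m - c) * exp (-b * u ^ 2)) m
  simp only [sub_add_cancel] at hshift
  have hsplit : (fun u : ℝ => (u + m - c) * exp (-b * u ^ 2))
      = fun u => u * exp (-b * u ^ 2) + (m - c) * exp (-b * u ^ 2) := by
    ext u; ring
  rw [hshift, hsplit, integral_add (integrable_mul_exp_neg_mul_sq hb)
    ((integrable_exp_neg_mul_sq hb).const_mul _), integral_mul_exp_neg_mul_sq, zero_add,
    integral_const_mul, integral_gaussian]

theorem gaussDensity_of_pos {σ : ℝ} (hσ : 0 < σ) (μ y : ℝ) :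
    gaussDensity μ σ y = exp (-(y - μ) ^ 2 / (2 * σ ^ 2)) / (√(2 * π) * σ) := by
  rw [gaussDensity, sqrt_mul (by positivity), sqrt_sq hσ.le, inv_mul_eq_div]

theorem rpow_three_div_two_eq_mul_sqrt {x : ℝ} (hx : 0 ≤ x) : x ^ ((3 : ℝ) / 2) = x * √x := by
  rw [show (3 : ℝ) / 2 = 1 + 1 / 2 by norm_num, rpow_add' hx (by norm_num), rpow_one,
    ← sqrt_eq_rpow]

section CompletingSquare

variable {σ₀ σ₁ s : ℝ} (μ₀ μ₁ t x y : ℝ)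

theorem sq_div_add_sq_div_eq_sq_div_add_mul_sq (hσ₀ : σ₀ ≠ 0) (hσ₁ : σ₁ ≠ 0) (hs : s ≠ 0) :
    ((x - t * y) / s - μ₀) ^ 2 / (2 * σ₀ ^ 2) + (y - μ₁) ^ 2 / (2 * σ₁ ^ 2)
      = (x - μ₀ * s - μ₁ * t) ^ 2 / (2 * (σ₁ ^ 2 * t ^ 2 + σ₀ ^ 2 * s ^ 2))
        + (σ₁ ^ 2 * t ^ 2 + σ₀ ^ 2 * s ^ 2) / (2 * σ₀ ^ 2 * σ₁ ^ 2 * s ^ 2)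
          * (y - (t * σ₁ ^ 2 * (x - μ₀ * s) + μ₁ * σ₀ ^ 2 * s ^ 2)
              / (σ₁ ^ 2 * t ^ 2 + σ₀ ^ 2 * s ^ 2)) ^ 2 := by
  have hV : σ₁ ^ 2 * t ^ 2 + σ₀ ^ 2 * s ^ 2 ≠ 0 := by positivity
  field_simp
  ring

theorem gaussDensity_div_mul_gaussDensity (hσ₀ : 0 < σ₀) (hσ₁ : 0 < σ₁) (hs : s ≠ 0) :
    gaussDensity μ₀ σ₀ ((x - t * y) / s) * gaussDensity μ₁ σ₁ y
      = exp (-(x - μ₀ * s - μ₁ * t) ^ 2 / (2 * (σ₁ ^ 2 * t ^ 2 + σ₀ ^ 2 * s ^ 2)))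
          / (2 * π * σ₀ * σ₁)
        * exp (-((σ₁ ^ 2 * t ^ 2 + σ₀ ^ 2 * s ^ 2) / (2 * σ₀ ^ 2 * σ₁ ^ 2 * s ^ 2))
          * (y - (t * σ₁ ^ 2 * (x - μ₀ * s) + μ₁ * σ₀ ^ 2 * s ^ 2)
              / (σ₁ ^ 2 * t ^ 2 + σ₀ ^ 2 * s ^ 2)) ^ 2) := by
  have hexp : exp (-((x - t * y) / s - μ₀) ^ 2 / (2 * σ₀ ^ 2)) * exp (-(y - μ₁) ^ 2 / (2 * σ₁ ^ 2))
      = exp (-(x - μ₀ * s - μ₁ * t) ^ 2 / (2 * (σ₁ ^ 2 * t ^ 2 + σ₀ ^ 2 * s ^ 2)))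
        * exp (-((σ₁ ^ 2 * t ^ 2 + σ₀ ^ 2 * s ^ 2) / (2 * σ₀ ^ 2 * σ₁ ^ 2 * s ^ 2))
          * (y - (t * σ₁ ^ 2 * (x - μ₀ * s) + μ₁ * σ₀ ^ 2 * s ^ 2)
              / (σ₁ ^ 2 * t ^ 2 + σ₀ ^ 2 * s ^ 2)) ^ 2) := by
    rw [← exp_add, ← exp_add]
    congr 1
    linear_combination -(sq_div_add_sq_div_eq_sq_div_add_mul_sq μ₀ μ₁ t x y hσ₀.ne' hσ₁.ne' hs)
  rw [gaussDensity_of_pos hσ₀, gaussDensity_of_pos hσ₁, div_mul_div_comm, hexp,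
    mul_mul_mul_comm, mul_self_sqrt (by positivity)]
  ring

end CompletingSquare

/-- Closed form of the first-moment Gaussian integral (numerator of the explicit
flow-matching vector field between two Gaussians under the linear conditional flow). -/
theorem gaussian_flow_matching_first_moment (μ₀ μ₁ σ₀ σ₁ t x : ℝ)
    (hσ₀ : 0 < σ₀) (hσ₁ : 0 < σ₁) (ht : t ∈ Set.Ico (0 : ℝ) 1) :
    ∫ x₁ : ℝ, (x₁ - x) / (1 - t) *
        (gaussDensity μ₀ σ₀ ((x - t * x₁) / (1 - t)) * gaussDensity μ₁ σ₁ x₁) =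
      Real.exp (-(x - μ₀ * (1 - t) - μ₁ * t) ^ 2 /
          (2 * (σ₁ ^ 2 * t ^ 2 + σ₀ ^ 2 * (1 - t) ^ 2))) / Real.sqrt (2 * Real.pi) *
        ((1 - t) * (σ₁ ^ 2 * t * (x - μ₀) + σ₀ ^ 2 * (t - 1) * (x - μ₁)) /
          (σ₁ ^ 2 * t ^ 2 + σ₀ ^ 2 * (1 - t) ^ 2) ^ ((3 : ℝ) / 2)) := by
  have hs : 0 < 1 - t := sub_pos.mpr ht.2
  simp only [gaussDensity_div_mul_gaussDensity μ₀ μ₁ t x _ hσ₀ hσ₁ hs.ne']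
  set V := σ₁ ^ 2 * t ^ 2 + σ₀ ^ 2 * (1 - t) ^ 2 with hV_def
  set E := exp (-(x - μ₀ * (1 - t) - μ₁ * t) ^ 2 / (2 * V))
  set a := V / (2 * σ₀ ^ 2 * σ₁ ^ 2 * (1 - t) ^ 2)
  set m := (t * σ₁ ^ 2 * (x - μ₀ * (1 - t)) + μ₁ * σ₀ ^ 2 * (1 - t) ^ 2) / V with hm
  have hV : 0 < V := by positivity
  have ha : 0 < a := by positivity
  have hsqrt : √(π / a) = √(2 * π) * (σ₀ * σ₁ * (1 - t)) / √V := by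
    rw [div_div_eq_mul_div, sqrt_div' _ hV.le, ← sqrt_sq (by positivity : 0 ≤ σ₀ * σ₁ * (1 - t)),
      ← sqrt_mul (by positivity)]
    ring_nf
  have hmx : m - x = (1 - t) * (σ₁ ^ 2 * t * (x - μ₀) + σ₀ ^ 2 * (t - 1) * (x - μ₁)) / V := by
    rw [hm, hV_def]
    field_simp
    ring
  calc _ = ∫ y : ℝ, E / (2 * π * σ₀ * σ₁) / (1 - t) * ((y - x) * exp (-a * (y - m) ^ 2)) := by
        congr 1
        ext y
        ring
    _ = E / (2 * π * σ₀ * σ₁) / (1 - t) * ((m - x) * √(π / a)) := by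
        rw [integral_const_mul, integral_sub_mul_exp_neg_mul_sq_sub ha]
    _ = _ := by
        rw [hsqrt, rpow_three_div_two_eq_mul_sqrt hV.le, hmx]
        field_simp
        rw [sq_sqrt (by positivity)]
        ring
end

section
/- Let μ₀, μ₁ ∈ ℝ, σ₀, σ₁ > 0, x₀ ∈ ℝ, and define v(x,t) = (σ₁² t (x − μ₀) − σ₀² (1−t)(x − μ₁)) / (σ₁² t² + σ₀² (1−t)²) and x(t) = (1−t)μ₀ + t μ₁ + (x₀ − μ₀) √((σ₁/σ₀)² t² + (1−t)²) for t ∈ [0,1]. Then x(0) = x₀, x(t) is differentiable on [0,1] and satisfies the ODE x'(t) = v(x(t), t) for all t ∈ [0,1], and the terminal point is x(1) = μ₁ + (x₀ − μ₀) σ₁/σ₀, i.e., the endpoint map x₀ ↦ x(1) is the Monge optimal-transport map between N(μ₀, σ₀²) and N(μ₁, σ₁²). -/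
/-!
Write `r = σ₁/σ₀` and `s(t) = √(r²t² + (1-t)²)`, so that the denominator of `v` is `σ₀² s(t)²`.
Along `x(t) = (1-t)μ₀ + tμ₁ + (x₀-μ₀) s(t)` the numerator of `v` splits as
`(μ₁-μ₀) σ₀² s² + (x₀-μ₀) s (σ₁²t - σ₀²(1-t))`, hence `v(x(t),t) = μ₁ - μ₀ + (x₀-μ₀) s'(t) = x'(t)`.
Since `s(0) = 1` and `s(1) = r`, the endpoints are `x₀` and `μ₁ + (x₀-μ₀) r`.
-/

namespace GaussianFlow

theorem sq_mul_sq_add_one_sub_sq_pos {r : ℝ} (hr : r ≠ 0) (t : ℝ) :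
    0 < r ^ 2 * t ^ 2 + (1 - t) ^ 2 := by
  rcases eq_or_ne t 1 with rfl | ht
  · norm_num
    positivity
  · have : 0 < (1 - t) ^ 2 := by
      have : 1 - t ≠ 0 := sub_ne_zero.mpr ht.symm
      positivity
    positivity

theorem hasDerivAt_sqrt_sq_mul_sq_add_one_sub_sq {r : ℝ} (hr : r ≠ 0) (t : ℝ) :
    HasDerivAt (fun t => √(r ^ 2 * t ^ 2 + (1 - t) ^ 2))
      ((r ^ 2 * t - (1 - t)) / √(r ^ 2 * t ^ 2 + (1 - t) ^ 2)) t := by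
  have hq : HasDerivAt (fun t => r ^ 2 * t ^ 2 + (1 - t) ^ 2)
      (r ^ 2 * (2 * t) + 2 * (1 - t) * (-1)) t := by
    have hsq := (hasDerivAt_pow 2 t).const_mul (r ^ 2)
    have hsub := ((hasDerivAt_id t).const_sub 1).fun_pow 2
    simpa using hsq.fun_add hsub
  convert hq.sqrt (sq_mul_sq_add_one_sub_sq_pos hr t).ne' using 1
  ring

theorem hasDerivAt_trajectory {r : ℝ} (hr : r ≠ 0) (μ₀ μ₁ c t : ℝ) :
    HasDerivAt (fun t => (1 - t) * μ₀ + t * μ₁ + c * √(r ^ 2 * t ^ 2 + (1 - t) ^ 2))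
      (μ₁ - μ₀ + c * ((r ^ 2 * t - (1 - t)) / √(r ^ 2 * t ^ 2 + (1 - t) ^ 2))) t := by
  have hlin : HasDerivAt (fun t : ℝ => (1 - t) * μ₀ + t * μ₁) (μ₁ - μ₀) t := by
    have := (((hasDerivAt_id t).const_sub 1).mul_const μ₀).fun_add ((hasDerivAt_id t).mul_const μ₁)
    simpa [sub_eq_neg_add] using this
  exact hlin.fun_add ((hasDerivAt_sqrt_sq_mul_sq_add_one_sub_sq hr t).const_mul c)

theorem velocity_along_trajectory {σ₀ σ₁ : ℝ} (hσ₀ : σ₀ ≠ 0) (hσ₁ : σ₁ ≠ 0) (μ₀ μ₁ c t : ℝ) :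
    let s := √((σ₁ / σ₀) ^ 2 * t ^ 2 + (1 - t) ^ 2)
    let x := (1 - t) * μ₀ + t * μ₁ + c * s
    (σ₁ ^ 2 * t * (x - μ₀) - σ₀ ^ 2 * (1 - t) * (x - μ₁)) /
        (σ₁ ^ 2 * t ^ 2 + σ₀ ^ 2 * (1 - t) ^ 2) =
      μ₁ - μ₀ + c * (((σ₁ / σ₀) ^ 2 * t - (1 - t)) / s) := by
  intro s x
  have hq := sq_mul_sq_add_one_sub_sq_pos (div_ne_zero hσ₁ hσ₀) t
  have hs : 0 < s := Real.sqrt_pos.mpr hq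
  have hD : σ₁ ^ 2 * t ^ 2 + σ₀ ^ 2 * (1 - t) ^ 2 = σ₀ ^ 2 * s ^ 2 := by
    rw [Real.sq_sqrt hq.le]
    field_simp
  rw [hD, div_eq_iff (by positivity)]
  field_simp
  linear_combination (μ₁ - μ₀) * hD

end GaussianFlow

open GaussianFlow in
/-- Exact trajectory of the explicit flow-matching ODE between two Gaussians:
`x(t) = (1−t)μ₀ + tμ₁ + (x₀−μ₀)√((σ₁/σ₀)² t² + (1−t)²)` starts at `x₀`, solves
`x' = v(x,t)` on `[0,1]`, and ends at the Monge optimal-transport image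
`μ₁ + (x₀−μ₀)σ₁/σ₀`. -/
theorem gaussian_flow_matching_trajectory (μ₀ μ₁ σ₀ σ₁ x₀ : ℝ)
    (hσ₀ : 0 < σ₀) (hσ₁ : 0 < σ₁)
    (v : ℝ → ℝ → ℝ)
    (hv : ∀ x t, v x t =
      (σ₁ ^ 2 * t * (x - μ₀) - σ₀ ^ 2 * (1 - t) * (x - μ₁)) /
        (σ₁ ^ 2 * t ^ 2 + σ₀ ^ 2 * (1 - t) ^ 2))
    (x : ℝ → ℝ)
    (hx : ∀ t, x t = (1 - t) * μ₀ + t * μ₁ +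
      (x₀ - μ₀) * Real.sqrt ((σ₁ / σ₀) ^ 2 * t ^ 2 + (1 - t) ^ 2)) :
    x 0 = x₀ ∧
    (∀ t ∈ Set.Icc (0 : ℝ) 1, HasDerivAt x (v (x t) t) t) ∧
    x 1 = μ₁ + (x₀ - μ₀) * (σ₁ / σ₀) := by
  obtain rfl : x = _ := funext hx
  refine ⟨by simp, fun t _ => ?_, by simp [Real.sqrt_sq (div_pos hσ₁ hσ₀).le]⟩
  rw [hv, velocity_along_trajectory hσ₀.ne' hσ₁.ne']
  exact hasDerivAt_trajectory (div_pos hσ₁ hσ₀).ne' μ₀ μ₁ (x₀ - μ₀) t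
end

section
/- Let μ₁ ∈ ℝ, σ₁ > 0, σ_e > 0, t ∈ (0,1), and x ∈ ℝ. Let ρ₀ = N(0,1) be the standard Gaussian density and ρ₁ = N(μ₁, σ₁²). Set A(t) = σ_e² t(1−t) + (1−t)² and define the conditional velocity w(x, t | x₁) = (x₁ − x)/(1 − t + t σ_e²) + σ_e² ((1−2t) x + t x₁) / (2((1−t)² + (1−t) t σ_e²)). Then the self-normalized average [∫ w(x, t | x₁) ρ₀((x − x₁ t)/√A(t)) ρ₁(x₁) dx₁] / [∫ ρ₀((x − x₁ t)/√A(t)) ρ₁(x₁) dx₁] equals the closed form v(x,t) = [x (t σ₁² + (1−t) σ_e²/2) − (x − μ₁)((1−t) + t σ_e²/2)] / (t(1−t) σ_e² + σ₁² t² + (1−t)²). -/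
set_option maxHeartbeats 1000000


open MeasureTheory Real

lemma integral_shifted_gauss {p : ℝ} (hp : 0 < p) (m : ℝ) :
    (∫ y : ℝ, Real.exp (-p * (y - m) ^ 2)) = Real.sqrt (Real.pi / p) := by
  rw [integral_sub_right_eq_self (fun y => Real.exp (-p * y ^ 2)) m]
  exact integral_gaussian p

lemma integral_x_gauss {p : ℝ} (hp : 0 < p) :
    (∫ y : ℝ, y * Real.exp (-p * y ^ 2)) = 0 := by
  have h := integral_neg_eq_self (fun y : ℝ => y * Real.exp (-p * y ^ 2)) (volume : Measure ℝ)
  have h2 : (∫ y : ℝ, (-y) * Real.exp (-p * (-y) ^ 2)) =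
      -∫ y : ℝ, y * Real.exp (-p * y ^ 2) := by
    rw [← integral_neg]
    congr 1; ext y; ring_nf
  rw [h2] at h
  linarith

lemma integral_x_shifted_gauss {p : ℝ} (hp : 0 < p) (m : ℝ) :
    (∫ y : ℝ, y * Real.exp (-p * (y - m) ^ 2)) = m * Real.sqrt (Real.pi / p) := by
  have h := integral_sub_right_eq_self (μ := volume) (fun y => (y + m) * Real.exp (-p * y ^ 2)) m
  simp only [sub_add_cancel] at h
  rw [h]
  simp_rw [add_mul]
  rw [integral_add (integrable_mul_exp_neg_mul_sq hp)
    ((integrable_exp_neg_mul_sq hp).const_mul m), integral_x_gauss hp,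
    integral_const_mul, integral_gaussian, zero_add]

/-- Closed form of the explicit flow-matching vector field from the standard
Gaussian to `N(μ₁, σ₁²)` in the stochastic (Brownian-bridge) setting with noise
scale `σ_e √(t(1−t))`. -/
theorem gaussian_stochastic_flow_matching_vector_field (μ₁ σ₁ σe t x : ℝ)
    (hσ₁ : 0 < σ₁) (hσe : 0 < σe) (ht : t ∈ Set.Ioo (0 : ℝ) 1)
    (ρ0 ρ1 : ℝ → ℝ)
    (hρ0 : ∀ y, ρ0 y = gaussDensity 0 1 y)
    (hρ1 : ∀ y, ρ1 y = gaussDensity μ₁ σ₁ y)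
    (A : ℝ) (hA : A = σe ^ 2 * t * (1 - t) + (1 - t) ^ 2)
    (w : ℝ → ℝ)
    (hw : ∀ x₁, w x₁ = (x₁ - x) / (1 - t + t * σe ^ 2) +
      σe ^ 2 * ((1 - 2 * t) * x + t * x₁) /
        (2 * ((1 - t) ^ 2 + (1 - t) * t * σe ^ 2))) :
    (∫ x₁ : ℝ, w x₁ * (ρ0 ((x - x₁ * t) / Real.sqrt A) * ρ1 x₁)) /
      (∫ x₁ : ℝ, ρ0 ((x - x₁ * t) / Real.sqrt A) * ρ1 x₁) =
    (x * (t * σ₁ ^ 2 + (1 - t) * σe ^ 2 / 2) -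
        (x - μ₁) * ((1 - t) + t * σe ^ 2 / 2)) /
      (t * (1 - t) * σe ^ 2 + σ₁ ^ 2 * t ^ 2 + (1 - t) ^ 2) := by
  obtain ⟨ht0, ht1⟩ := ht
  have h1t : 0 < 1 - t := by linarith
  have hσe2 : 0 < σe ^ 2 := by positivity
  have hσ12 : 0 < σ₁ ^ 2 := by positivity
  set S : ℝ := 1 - t + t * σe ^ 2 with hS_def
  have hS : 0 < S := by nlinarith
  set E : ℝ := (1 - t) ^ 2 + (1 - t) * t * σe ^ 2 with hE_def
  have hE : E = (1 - t) * S := by rw [hE_def, hS_def]; ring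
  have hEpos : 0 < E := by rw [hE]; positivity
  have hA0 : 0 < A := by rw [hA]; nlinarith
  set D : ℝ := t ^ 2 * σ₁ ^ 2 + A with hD_def
  have hD : 0 < D := by positivity
  set p : ℝ := D / (2 * A * σ₁ ^ 2) with hp_def
  have hp : 0 < p := by positivity
  set m : ℝ := (t * x * σ₁ ^ 2 + μ₁ * A) / D with hm_def
  set K : ℝ := -(x - t * m) ^ 2 / (2 * A) - (m - μ₁) ^ 2 / (2 * σ₁ ^ 2) with hK_def
  set C : ℝ := (Real.sqrt (2 * Real.pi * 1 ^ 2))⁻¹ *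
      ((Real.sqrt (2 * Real.pi * σ₁ ^ 2))⁻¹ * Real.exp K) with hC_def
  have hCpos : 0 < C := by
    rw [hC_def]
    have h2π : 0 < 2 * Real.pi := by positivity
    positivity
  -- product of densities is a shifted Gaussian
  have hsq : ∀ x₁ : ℝ, ((x - x₁ * t) / Real.sqrt A) ^ 2 = (x - x₁ * t) ^ 2 / A := by
    intro x₁; rw [div_pow, Real.sq_sqrt hA0.le]
  have hprod : ∀ x₁ : ℝ, ρ0 ((x - x₁ * t) / Real.sqrt A) * ρ1 x₁ =
      C * Real.exp (-p * (x₁ - m) ^ 2) := by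
    intro x₁
    rw [hρ0, hρ1]
    simp only [gaussDensity, sub_zero]
    have hexp : Real.exp (-((x - x₁ * t) / Real.sqrt A) ^ 2 / (2 * 1 ^ 2)) *
        Real.exp (-(x₁ - μ₁) ^ 2 / (2 * σ₁ ^ 2)) =
        Real.exp K * Real.exp (-p * (x₁ - m) ^ 2) := by
      rw [← Real.exp_add, ← Real.exp_add, hsq x₁]
      congr 1
      rw [hK_def, hp_def, hm_def, hD_def]
      have hDne2 : t ^ 2 * σ₁ ^ 2 + A ≠ 0 := by positivity
      field_simp
      ring
    rw [hC_def, mul_mul_mul_comm, hexp]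
    ring
  -- w is affine
  set a : ℝ := 1 / S + σe ^ 2 * t / (2 * E) with ha_def
  set b : ℝ := -x / S + σe ^ 2 * (1 - 2 * t) * x / (2 * E) with hb_def
  have hwa : ∀ x₁, w x₁ = a * x₁ + b := by
    intro x₁
    rw [hw x₁, ha_def, hb_def]
    field_simp
    ring
  -- integrability
  have hig : Integrable (fun x₁ : ℝ => Real.exp (-p * (x₁ - m) ^ 2)) :=
    (integrable_exp_neg_mul_sq hp).comp_sub_right m
  have hixg : Integrable (fun x₁ : ℝ => x₁ * Real.exp (-p * (x₁ - m) ^ 2)) := by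
    have h1 : Integrable (fun x₁ : ℝ => (x₁ - m) * Real.exp (-p * (x₁ - m) ^ 2)) :=
      (integrable_mul_exp_neg_mul_sq hp).comp_sub_right m
    exact (h1.add (hig.const_mul m)).congr
      (Filter.Eventually.of_forall fun x₁ => by simp only [Pi.add_apply]; ring)
  -- compute denominator
  have hden : (∫ x₁ : ℝ, ρ0 ((x - x₁ * t) / Real.sqrt A) * ρ1 x₁) =
      C * Real.sqrt (Real.pi / p) := by
    simp_rw [hprod]
    rw [integral_const_mul, integral_shifted_gauss hp]
  -- compute numerator
  have hnum : (∫ x₁ : ℝ, w x₁ * (ρ0 ((x - x₁ * t) / Real.sqrt A) * ρ1 x₁)) =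
      C * Real.sqrt (Real.pi / p) * (a * m + b) := by
    have heq : ∀ x₁ : ℝ, w x₁ * (ρ0 ((x - x₁ * t) / Real.sqrt A) * ρ1 x₁) =
        (a * C) * (x₁ * Real.exp (-p * (x₁ - m) ^ 2)) +
        (b * C) * Real.exp (-p * (x₁ - m) ^ 2) := by
      intro x₁; rw [hprod x₁, hwa x₁]; ring
    simp_rw [heq]
    rw [integral_add ((hixg.const_mul (a * C))) (hig.const_mul (b * C)),
      integral_const_mul, integral_const_mul, integral_x_shifted_gauss hp,
      integral_shifted_gauss hp]
    ring
  have hsqrtpos : 0 < Real.sqrt (Real.pi / p) := by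
    apply Real.sqrt_pos.mpr; positivity
  rw [hnum, hden, mul_comm (C * Real.sqrt (Real.pi / p)) (a * m + b),
    mul_div_assoc, div_self (by positivity : C * Real.sqrt (Real.pi / p) ≠ 0), mul_one]
  -- final algebra
  have hRden : t * (1 - t) * σe ^ 2 + σ₁ ^ 2 * t ^ 2 + (1 - t) ^ 2 = D := by
    rw [hD_def, hA]; ring
  rw [hRden, ha_def, hb_def, hm_def, hE, hA, hS_def]
  have hDne : D ≠ 0 := hD.ne'
  have hD' : D = t ^ 2 * σ₁ ^ 2 + (σe ^ 2 * t * (1 - t) + (1 - t) ^ 2) := by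
    rw [hD_def, hA]
  field_simp
  rw [hD']
  ring
end

section
/- Let μ₁ ∈ ℝ, σ₁ > 0, σ_e ≥ 0, x₀ ∈ ℝ, and define v(x,t) = [x (t σ₁² + (1−t) σ_e²/2) − (x − μ₁)((1−t) + t σ_e²/2)] / (t(1−t) σ_e² + σ₁² t² + (1−t)²) and x(t) = μ₁ t + x₀ √(t(1−t) σ_e² + σ₁² t² + (1−t)²) for t ∈ [0,1]. Then x(0) = x₀, x(t) is differentiable on [0,1] and satisfies x'(t) = v(x(t), t) for all t ∈ [0,1], and x(1) = μ₁ + x₀ σ₁. In the limit σ_e → 0 these expressions reduce to the deterministic Gaussian-to-Gaussian vector field and trajectory with μ₀ = 0, σ₀ = 1. -/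
/-!
With `D(t) = t(1-t)σ_e² + σ₁²t² + (1-t)²` the variance of the interpolant at time `t`, the field is
`v(y, t) = μ₁ + D'(t) / (2 D(t)) · (y - μ₁ t)`: transport of the mean `μ₁ t` plus the rescaling
`(√D)' / √D` of the fluctuation around it. The path `μ₁ t + x₀ √D(t)` carries the fluctuation
`x₀ √D(t)`, whose logarithmic derivative is exactly that rescaling factor. The `σ_e → 0` limits are
continuity in `σ_e`, the variance at `σ_e = 0` being positive.
-/

open Real Filter Set Topology

noncomputable section

def bridgeVariance (σ₁ σe t : ℝ) : ℝ :=
  t * (1 - t) * σe ^ 2 + σ₁ ^ 2 * t ^ 2 + (1 - t) ^ 2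

def bridgeField (μ₁ σ₁ σe y t : ℝ) : ℝ :=
  (y * (t * σ₁ ^ 2 + (1 - t) * σe ^ 2 / 2) - (y - μ₁) * ((1 - t) + t * σe ^ 2 / 2)) /
    bridgeVariance σ₁ σe t

end

lemma sq_mul_sq_add_one_sub_sq_pos {a : ℝ} (ha : a ≠ 0) (t : ℝ) :
    0 < a ^ 2 * t ^ 2 + (1 - t) ^ 2 := by
  rcases eq_or_ne t 0 with rfl | ht
  · norm_num
  · have : 0 < a ^ 2 * t ^ 2 := by positivity
    positivity

lemma bridgeVariance_pos {σ₁ : ℝ} (hσ₁ : σ₁ ≠ 0) (σe : ℝ) {t : ℝ} (ht : t ∈ Icc (0 : ℝ) 1) :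
    0 < bridgeVariance σ₁ σe t := by
  have hnoise : 0 ≤ t * (1 - t) * σe ^ 2 := by
    have := sub_nonneg.2 ht.2
    have := ht.1
    positivity
  have := sq_mul_sq_add_one_sub_sq_pos hσ₁ t
  unfold bridgeVariance
  linarith

lemma hasDerivAt_bridgeVariance (σ₁ σe t : ℝ) :
    HasDerivAt (bridgeVariance σ₁ σe)
      ((1 - 2 * t) * σe ^ 2 + 2 * σ₁ ^ 2 * t - 2 * (1 - t)) t := by
  have h := (((hasDerivAt_id' t).mul ((hasDerivAt_id' t).const_sub 1)).mul_const (σe ^ 2)).add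
    (((hasDerivAt_id' t).pow 2).const_mul (σ₁ ^ 2)) |>.add (((hasDerivAt_id' t).const_sub 1).pow 2)
  refine h.congr_deriv ?_
  push_cast
  ring

lemma bridgeField_eq {σ₁ σe t : ℝ} (hD : bridgeVariance σ₁ σe t ≠ 0) (μ₁ y : ℝ) :
    bridgeField μ₁ σ₁ σe y t = μ₁ +
      ((1 - 2 * t) * σe ^ 2 + 2 * σ₁ ^ 2 * t - 2 * (1 - t)) / (2 * bridgeVariance σ₁ σe t) *
        (y - μ₁ * t) := by
  unfold bridgeField
  field_simp
  unfold bridgeVariance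
  ring

lemma hasDerivAt_mul_add_mul_sqrt {D : ℝ → ℝ} {D' t : ℝ} (hD : HasDerivAt D D' t) (hpos : 0 < D t)
    (m x₀ : ℝ) :
    HasDerivAt (fun u ↦ m * u + x₀ * √(D u)) (m + D' / (2 * D t) * (x₀ * √(D t))) t := by
  have h := ((hasDerivAt_id' t).const_mul m).add ((hD.sqrt hpos.ne').const_mul x₀)
  refine h.congr_deriv ?_
  have hsqrt : √(D t) ≠ 0 := (sqrt_pos.2 hpos).ne'
  have hsq : D t = √(D t) ^ 2 := (sq_sqrt hpos.le).symm
  set r := √(D t)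
  rw [hsq]
  field_simp

lemma bridgeField_zero_noise (μ₁ σ₁ y t : ℝ) :
    bridgeField μ₁ σ₁ 0 y t =
      (σ₁ ^ 2 * t * y - (1 - t) * (y - μ₁)) / (σ₁ ^ 2 * t ^ 2 + (1 - t) ^ 2) := by
  unfold bridgeField bridgeVariance
  ring_nf

lemma tendsto_bridgeField_zero_noise {σ₁ : ℝ} (hσ₁ : σ₁ ≠ 0) (μ₁ y t : ℝ) :
    Tendsto (fun s ↦ bridgeField μ₁ σ₁ s y t) (𝓝 0) (𝓝 (bridgeField μ₁ σ₁ 0 y t)) := by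
  have hD : bridgeVariance σ₁ 0 t ≠ 0 := by
    simpa [bridgeVariance] using (sq_mul_sq_add_one_sub_sq_pos hσ₁ t).ne'
  exact ((Continuous.tendsto (by fun_prop) 0).div
    (Continuous.tendsto (by unfold bridgeVariance; fun_prop) 0) hD)

theorem gaussian_stochastic_flow_matching_trajectory_general (μ₁ σ₁ σe x₀ : ℝ)
    (hσ₁ : 0 < σ₁)
    (v : ℝ → ℝ → ℝ)
    (hv : ∀ y t, v y t =
      (y * (t * σ₁ ^ 2 + (1 - t) * σe ^ 2 / 2) -
          (y - μ₁) * ((1 - t) + t * σe ^ 2 / 2)) /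
        (t * (1 - t) * σe ^ 2 + σ₁ ^ 2 * t ^ 2 + (1 - t) ^ 2))
    (x : ℝ → ℝ)
    (hx : ∀ t, x t = μ₁ * t +
      x₀ * Real.sqrt (t * (1 - t) * σe ^ 2 + σ₁ ^ 2 * t ^ 2 + (1 - t) ^ 2)) :
    x 0 = x₀ ∧
    (∀ t ∈ Set.Icc (0 : ℝ) 1, HasDerivAt x (v (x t) t) t) ∧
    x 1 = μ₁ + x₀ * σ₁ ∧
    (∀ y : ℝ, ∀ t ∈ Set.Icc (0 : ℝ) 1,
      Tendsto (fun s : ℝ =>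
          (y * (t * σ₁ ^ 2 + (1 - t) * s ^ 2 / 2) -
              (y - μ₁) * ((1 - t) + t * s ^ 2 / 2)) /
            (t * (1 - t) * s ^ 2 + σ₁ ^ 2 * t ^ 2 + (1 - t) ^ 2))
        (nhds 0)
        (nhds ((σ₁ ^ 2 * t * y - (1 - t) * (y - μ₁)) /
          (σ₁ ^ 2 * t ^ 2 + (1 - t) ^ 2))) ∧
      Tendsto (fun s : ℝ =>
          μ₁ * t + x₀ * Real.sqrt (t * (1 - t) * s ^ 2 + σ₁ ^ 2 * t ^ 2 + (1 - t) ^ 2))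
        (nhds 0)
        (nhds (μ₁ * t + x₀ * Real.sqrt (σ₁ ^ 2 * t ^ 2 + (1 - t) ^ 2)))) := by
  have hx' : x = fun u ↦ μ₁ * u + x₀ * √(bridgeVariance σ₁ σe u) := funext hx
  refine ⟨by simp [hx', bridgeVariance], fun t ht ↦ ?_, ?_, fun y t _ ↦ ⟨?_, ?_⟩⟩
  · have hD := bridgeVariance_pos hσ₁.ne' σe ht
    have hvx : v (x t) t = bridgeField μ₁ σ₁ σe (x t) t := hv (x t) t
    rw [hvx, bridgeField_eq hD.ne', hx']
    convert hasDerivAt_mul_add_mul_sqrt (hasDerivAt_bridgeVariance σ₁ σe t) hD μ₁ x₀ using 2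
    ring
  · simp [hx', bridgeVariance, sqrt_sq hσ₁.le]
  · rw [← bridgeField_zero_noise]
    exact tendsto_bridgeField_zero_noise hσ₁.ne' μ₁ y t
  · have h := (Continuous.tendsto (f := fun s : ℝ ↦ μ₁ * t + x₀ * √(bridgeVariance σ₁ s t))
      (by unfold bridgeVariance; fun_prop) 0)
    simpa [bridgeVariance] using h

/-- Exact trajectory of the stochastic explicit flow-matching (probability-flow)
ODE from `N(0,1)` to `N(μ₁,σ₁²)` with Brownian-bridge noise of intensity
`σ_e √(t(1−t))`: `x(t) = μ₁ t + x₀ √(t(1−t)σ_e² + σ₁² t² + (1−t)²)` starts at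
`x₀`, solves `x' = v(x,t)` on `[0,1]`, ends at `μ₁ + x₀ σ₁`, and as `σ_e → 0`
the field and trajectory reduce to the deterministic Gaussian-to-Gaussian ones
(with `μ₀ = 0`, `σ₀ = 1`). -/
theorem gaussian_stochastic_flow_matching_trajectory (μ₁ σ₁ σe x₀ : ℝ)
    (hσ₁ : 0 < σ₁) (hσe : 0 ≤ σe)
    (v : ℝ → ℝ → ℝ)
    (hv : ∀ y t, v y t =
      (y * (t * σ₁ ^ 2 + (1 - t) * σe ^ 2 / 2) -
          (y - μ₁) * ((1 - t) + t * σe ^ 2 / 2)) /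
        (t * (1 - t) * σe ^ 2 + σ₁ ^ 2 * t ^ 2 + (1 - t) ^ 2))
    (x : ℝ → ℝ)
    (hx : ∀ t, x t = μ₁ * t +
      x₀ * Real.sqrt (t * (1 - t) * σe ^ 2 + σ₁ ^ 2 * t ^ 2 + (1 - t) ^ 2)) :
    x 0 = x₀ ∧
    (∀ t ∈ Set.Icc (0 : ℝ) 1, HasDerivAt x (v (x t) t) t) ∧
    x 1 = μ₁ + x₀ * σ₁ ∧
    (∀ y : ℝ, ∀ t ∈ Set.Icc (0 : ℝ) 1,
      Tendsto (fun s : ℝ =>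
          (y * (t * σ₁ ^ 2 + (1 - t) * s ^ 2 / 2) -
              (y - μ₁) * ((1 - t) + t * s ^ 2 / 2)) /
            (t * (1 - t) * s ^ 2 + σ₁ ^ 2 * t ^ 2 + (1 - t) ^ 2))
        (nhds 0)
        (nhds ((σ₁ ^ 2 * t * y - (1 - t) * (y - μ₁)) /
          (σ₁ ^ 2 * t ^ 2 + (1 - t) ^ 2))) ∧
      Tendsto (fun s : ℝ =>
          μ₁ * t + x₀ * Real.sqrt (t * (1 - t) * s ^ 2 + σ₁ ^ 2 * t ^ 2 + (1 - t) ^ 2))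
        (nhds 0)
        (nhds (μ₁ * t + x₀ * Real.sqrt (σ₁ ^ 2 * t ^ 2 + (1 - t) ^ 2)))) :=
  gaussian_stochastic_flow_matching_trajectory_general μ₁ σ₁ σe x₀ hσ₁ v hv x hx
end

section
/- Let μ₁ ∈ ℝ, σ₁ > 0, σ_e > 0, t ∈ (0,1), and x ∈ ℝ. Let ρ₀ = N(0,1) be the standard Gaussian density and ρ₁ = N(μ₁, σ₁²), and set A(t) = σ_e² t(1−t) + (1−t)². Then the explicit score [∫ (t x₁ − x) ρ₀((x − x₁ t)/√A(t)) ρ₁(x₁) dx₁] / [((1−t)² + (1−t) t σ_e²) ∫ ρ₀((x − x₁ t)/√A(t)) ρ₁(x₁) dx₁] equals s(x,t) = (t μ₁ − x) / ((1−t)² + t(1−t) σ_e² + t² σ₁²), which is the derivative in x of the logarithm of the marginal Gaussian density N(x | t μ₁, (1−t)² + t(1−t) σ_e² + t² σ₁²). -/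
/-!
Since `ρ₀((x − t x₁)/√A) = √A · N(x | t x₁, A)`, the integrands are Gaussian conjugate pairs:
as a function of `x₁`, the product `N(x | t x₁, A) · N(x₁ | μ₁, σ₁²)` factors
as the marginal density `N(x | t μ₁, t²σ₁² + A)` times a Gaussian posterior in `x₁` with mean
`m = (t σ₁² x + A μ₁) / (t²σ₁² + A)`. The ratio of integrals is therefore the posterior mean of
`(t x₁ − x) / A`, namely `(t m − x) / A = (t μ₁ − x) / (t²σ₁² + A)`, and `t²σ₁² + A` is the
variance in the statement.
-/

open MeasureTheory Real

open ProbabilityTheory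

lemma gaussDensity_eq_gaussianPDFReal (μ σ : ℝ) :
    gaussDensity μ σ = gaussianPDFReal μ ⟨σ ^ 2, sq_nonneg σ⟩ :=
  rfl

lemma integral_gaussDensity {σ : ℝ} (hσ : σ ≠ 0) (μ : ℝ) : ∫ y, gaussDensity μ σ y = 1 := by
  rw [gaussDensity_eq_gaussianPDFReal]
  exact integral_gaussianPDFReal_eq_one μ fun h => pow_ne_zero 2 hσ (congrArg Subtype.val h)

lemma integral_affine_mul_gaussDensity {σ : ℝ} (hσ : σ ≠ 0) (μ c d : ℝ) :
    ∫ y, (c * y - d) * gaussDensity μ σ y = c * μ - d := by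
  set v : NNReal := ⟨σ ^ 2, sq_nonneg σ⟩
  have hv : v ≠ 0 := fun h => pow_ne_zero 2 hσ (congrArg Subtype.val h)
  have hid : Integrable (fun y => y) (gaussianReal μ v) :=
    memLp_one_iff_integrable.mp (memLp_id_gaussianReal 1)
  calc ∫ y, (c * y - d) * gaussDensity μ σ y
      = ∫ y, (c * y - d) ∂gaussianReal μ v := by
        rw [integral_gaussianReal_eq_integral_smul hv, gaussDensity_eq_gaussianPDFReal]
        simp only [smul_eq_mul, mul_comm]
        rfl
    _ = c * μ - d := by
        rw [integral_sub (hid.const_mul c) (integrable_const (μ := gaussianReal μ v) d),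
          integral_const_mul, integral_id_gaussianReal]
        simp

lemma gaussDensity_zero_one_sub_div {s : ℝ} (hs : 0 < s) (μ x : ℝ) :
    gaussDensity 0 1 ((x - μ) / s) = s * gaussDensity μ s x := by
  have h2π : 0 < 2 * π := by positivity
  simp only [gaussDensity, sqrt_mul h2π.le, sqrt_sq hs.le, one_pow, mul_one, sub_zero, div_pow]
  field_simp

lemma gaussDensity_mul_gaussDensity {s σ : ℝ} (hs : 0 < s) (hσ : 0 < σ) (t μ x y : ℝ) :
    gaussDensity (t * y) s x * gaussDensity μ σ y =
      gaussDensity (t * μ) √(t ^ 2 * σ ^ 2 + s ^ 2) x *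
        gaussDensity ((t * σ ^ 2 * x + s ^ 2 * μ) / (t ^ 2 * σ ^ 2 + s ^ 2))
          (s * σ / √(t ^ 2 * σ ^ 2 + s ^ 2)) y := by
  set V := t ^ 2 * σ ^ 2 + s ^ 2
  have hV : 0 < V := by positivity
  have h2π : 0 < 2 * π := by positivity
  have hexp : ∀ a b c d : ℝ, a + b = c + d → exp a * exp b = exp c * exp d := fun a b c d h => by
    rw [← exp_add, ← exp_add, h]
  simp only [gaussDensity, sqrt_mul h2π.le, sqrt_sq hs.le, sqrt_sq hσ.le,
    sqrt_sq (sqrt_pos.mpr hV).le, sqrt_sq (by positivity : 0 ≤ s * σ / √V)]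
  rw [div_pow, sq_sqrt hV.le, mul_mul_mul_comm, mul_mul_mul_comm (√(2 * π) * √V)⁻¹,
    hexp _ _ (-(x - t * μ) ^ 2 / (2 * V))
      (-(y - (t * σ ^ 2 * x + s ^ 2 * μ) / V) ^ 2 / (2 * ((s * σ) ^ 2 / V)))]
  · field_simp
  · field_simp
    simp only [V]
    ring

lemma hasDerivAt_log_gaussDensity {σ : ℝ} (hσ : σ ≠ 0) (μ x : ℝ) :
    HasDerivAt (fun y => log (gaussDensity μ σ y)) ((μ - x) / σ ^ 2) x := by
  have hc : (√(2 * π * σ ^ 2))⁻¹ ≠ 0 := by positivity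
  have hlog : (fun y => log (gaussDensity μ σ y)) =
      fun y => log (√(2 * π * σ ^ 2))⁻¹ - (y - μ) ^ 2 / (2 * σ ^ 2) := by
    funext y
    rw [gaussDensity, log_mul hc (exp_ne_zero _), log_exp]
    ring
  have hsq : HasDerivAt (fun y => (y - μ) ^ 2 / (2 * σ ^ 2)) (2 * (x - μ) ^ 1 * 1 / (2 * σ ^ 2)) x :=
    (((hasDerivAt_id x).sub_const μ).pow 2).div_const (2 * σ ^ 2)
  rw [hlog]
  refine (hsq.const_sub _).congr_deriv ?_
  field_simp
  ring

/-- Closed form of the explicit score in the stochastic flow-matching setting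
with Brownian-bridge noise `σ_e √(t(1−t))`, from `N(0,1)` to `N(μ₁,σ₁²)`; the
score equals the spatial log-derivative of the marginal Gaussian density
`N(x | tμ₁, (1−t)² + t(1−t)σ_e² + t²σ₁²)`. -/
theorem gaussian_stochastic_flow_matching_score (μ₁ σ₁ σe t x : ℝ)
    (hσ₁ : 0 < σ₁) (hσe : 0 < σe) (ht : t ∈ Set.Ioo (0 : ℝ) 1)
    (ρ0 ρ1 : ℝ → ℝ)
    (hρ0 : ∀ y, ρ0 y = gaussDensity 0 1 y)
    (hρ1 : ∀ y, ρ1 y = gaussDensity μ₁ σ₁ y)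
    (A : ℝ) (hA : A = σe ^ 2 * t * (1 - t) + (1 - t) ^ 2) :
    (∫ x₁ : ℝ, (t * x₁ - x) * (ρ0 ((x - x₁ * t) / Real.sqrt A) * ρ1 x₁)) /
      (((1 - t) ^ 2 + (1 - t) * t * σe ^ 2) *
        ∫ x₁ : ℝ, ρ0 ((x - x₁ * t) / Real.sqrt A) * ρ1 x₁) =
    (t * μ₁ - x) / ((1 - t) ^ 2 + t * (1 - t) * σe ^ 2 + t ^ 2 * σ₁ ^ 2) ∧
    HasDerivAt
      (fun y => Real.log (gaussDensity (t * μ₁)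
        (Real.sqrt ((1 - t) ^ 2 + t * (1 - t) * σe ^ 2 + t ^ 2 * σ₁ ^ 2)) y))
      ((t * μ₁ - x) / ((1 - t) ^ 2 + t * (1 - t) * σe ^ 2 + t ^ 2 * σ₁ ^ 2)) x := by
  obtain ⟨ht0, ht1⟩ := ht
  have h1t : 0 < 1 - t := sub_pos.mpr ht1
  have hA_pos : 0 < A := hA ▸ add_pos (mul_pos (mul_pos (pow_pos hσe 2) ht0) h1t) (pow_pos h1t 2)
  set s := √A
  have hs : 0 < s := sqrt_pos.mpr hA_pos
  have hs2 : s ^ 2 = (1 - t) ^ 2 + (1 - t) * t * σe ^ 2 := by rw [sq_sqrt hA_pos.le, hA]; ring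
  set V := (1 - t) ^ 2 + t * (1 - t) * σe ^ 2 + t ^ 2 * σ₁ ^ 2
  have hV : t ^ 2 * σ₁ ^ 2 + s ^ 2 = V := by rw [hs2]; ring
  have hV_pos : 0 < V := hV ▸ by positivity
  refine ⟨?_, by
    simpa only [sq_sqrt hV_pos.le] using hasDerivAt_log_gaussDensity (sqrt_pos.mpr hV_pos).ne' _ x⟩
  set C := s * gaussDensity (t * μ₁) √V x
  have hC : 0 < C := by unfold C gaussDensity; positivity
  have hτ : s * σ₁ / √V ≠ 0 := by positivity
  have hjoint : ∀ x₁, ρ0 ((x - x₁ * t) / s) * ρ1 x₁ =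
      C * gaussDensity ((t * σ₁ ^ 2 * x + s ^ 2 * μ₁) / V) (s * σ₁ / √V) x₁ := by
    intro x₁
    rw [hρ0, hρ1, gaussDensity_zero_one_sub_div hs, mul_assoc, mul_comm x₁ t,
      gaussDensity_mul_gaussDensity hs hσ₁, hV, ← mul_assoc]
  simp_rw [hjoint, mul_left_comm _ C, integral_const_mul, integral_affine_mul_gaussDensity hτ,
    integral_gaussDensity hτ]
  rw [mul_one, ← hs2, mul_comm _ C, mul_div_mul_left _ _ hC.ne', ← hV]
  field_simp
  ring
end

section
/- Fix t ∈ [0,1), μ ∈ ℝ, σ > 0, and let X₀ ∼ N(0,1) and X₁ ∼ N(μ, σ²) be independent real random variables. Set X = (1−t) X₀ + t X₁, w(t) = (t σ² + t − 1)/((1−t)² + t² σ²), and let v(x) = w(t) x + (1−t)μ/((1−t)² + t² σ²) be the exact flow-matching field between N(0,1) and N(μ, σ²) at time t. Then the CFM gradient-update fluctuation X₁ − (X − t X₁)/(1−t) − v(X) has variance Var(X₁ − (X − t X₁)/(1−t) − v(X)) = (1 + w(t)(1−t))² · Var(X₀) + (1 − t·w(t))² · Var(X₁) = (1 + w(t)(1−t))²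 + (1 − t·w(t))² σ². -/
open MeasureTheory ProbabilityTheory

/-! Substituting `X = (1 - t) X₀ + t X₁` turns the fluctuation into the affine combination
`-(1 + w (1 - t)) X₀ + (1 - t w) X₁ - c` of the independent Gaussians `X₀` and `X₁`, whose variance
is the sum of the squared coefficients times the individual variances `1` and `σ²`. -/

lemma ProbabilityTheory.IndepFun.variance_mul_add_mul_add {Ω : Type*} [MeasurableSpace Ω]
    {P : Measure Ω} [IsProbabilityMeasure P] {Y Z : Ω → ℝ} (hY : MemLp Y 2 P) (hZ : MemLp Z 2 P)
    (h : IndepFun Y Z P) (a b c : ℝ) :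
    Var[fun ω => a * Y ω + b * Z ω + c; P] = a ^ 2 * Var[Y; P] + b ^ 2 * Var[Z; P] := by
  have hsum : Var[fun ω => a * Y ω + b * Z ω; P] = a ^ 2 * Var[Y; P] + b ^ 2 * Var[Z; P] := by
    rw [← variance_const_mul, ← variance_const_mul]
    exact (h.comp (measurable_const_mul a) (measurable_const_mul b)).variance_add
      (hY.const_mul a) (hZ.const_mul b)
  rw [variance_add_const (X := fun ω => a * Y ω + b * Z ω)
    ((hY.const_mul a).add (hZ.const_mul b)).aestronglyMeasurable, hsum]

lemma cfm_fluctuation_eq_affine {t w c x₀ x₁ : ℝ} (ht : t ≠ 1) :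
    x₁ - ((1 - t) * x₀ + t * x₁ - t * x₁) / (1 - t) - (w * ((1 - t) * x₀ + t * x₁) + c) =
      -(1 + w * (1 - t)) * x₀ + (1 - t * w) * x₁ + -c := by
  have h1t : 1 - t ≠ 0 := sub_ne_zero.mpr ht.symm
  field_simp
  ring

theorem cfm_update_variance_gaussian_pair_general {Ω : Type*} [MeasureSpace Ω]
    [IsProbabilityMeasure (ℙ : Measure Ω)]
    (t μ σ : ℝ) (ht : t ∈ Set.Ico (0 : ℝ) 1)
    (X₀ X₁ : Ω → ℝ) (hX₀ : Measurable X₀) (hX₁ : Measurable X₁)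
    (hlaw₀ : Measure.map X₀ ℙ = gaussianReal 0 1)
    (hlaw₁ : Measure.map X₁ ℙ = gaussianReal μ (⟨σ ^ 2, sq_nonneg σ⟩ : NNReal))
    (hindep : IndepFun X₀ X₁ ℙ)
    (w : ℝ)
    (v : ℝ → ℝ)
    (hv : ∀ y, v y = w * y + (1 - t) * μ / ((1 - t) ^ 2 + t ^ 2 * σ ^ 2))
    (X : Ω → ℝ) (hX : ∀ ω, X ω = (1 - t) * X₀ ω + t * X₁ ω) :
    variance (fun ω => X₁ ω - (X ω - t * X₁ ω) / (1 - t) - v (X ω)) ℙ =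
      (1 + w * (1 - t)) ^ 2 * variance X₀ ℙ +
        (1 - t * w) ^ 2 * variance X₁ ℙ ∧
    variance (fun ω => X₁ ω - (X ω - t * X₁ ω) / (1 - t) - v (X ω)) ℙ =
      (1 + w * (1 - t)) ^ 2 + (1 - t * w) ^ 2 * σ ^ 2 := by
  -- Retypes `⟨σ ^ 2, _⟩ : {r // 0 ≤ r}` as an `NNReal`, so that `IsGaussian` instances are found.
  set s : NNReal := ⟨σ ^ 2, sq_nonneg σ⟩
  have hlaw₀' : HasLaw X₀ (gaussianReal 0 1) := ⟨hX₀.aemeasurable, hlaw₀⟩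
  have hlaw₁' : HasLaw X₁ (gaussianReal μ s) := ⟨hX₁.aemeasurable, hlaw₁⟩
  have hdecomp : variance (fun ω => X₁ ω - (X ω - t * X₁ ω) / (1 - t) - v (X ω)) ℙ =
      (1 + w * (1 - t)) ^ 2 * variance X₀ ℙ + (1 - t * w) ^ 2 * variance X₁ ℙ := by
    simp_rw [hX, hv, cfm_fluctuation_eq_affine ht.2.ne]
    rw [hindep.variance_mul_add_mul_add hlaw₀'.hasGaussianLaw.memLp_two
      hlaw₁'.hasGaussianLaw.memLp_two, neg_sq]
  refine ⟨hdecomp, ?_⟩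
  rw [hdecomp, hlaw₀'.variance_eq, hlaw₁'.variance_eq, variance_id_gaussianReal,
    variance_id_gaussianReal, NNReal.coe_one, mul_one]
  rfl

/-- Analytical dispersion of the CFM gradient-update fluctuation at time `t` when
matching `N(0,1)` to `N(μ,σ²)` with the linear conditional flow and the exact
flow-matching field `v`: the variance decomposes into the two displayed terms. -/
theorem cfm_update_variance_gaussian_pair {Ω : Type*} [MeasureSpace Ω]
    [IsProbabilityMeasure (ℙ : Measure Ω)]
    (t μ σ : ℝ) (ht : t ∈ Set.Ico (0 : ℝ) 1) (hσ : 0 < σ)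
    (X₀ X₁ : Ω → ℝ) (hX₀ : Measurable X₀) (hX₁ : Measurable X₁)
    (hlaw₀ : Measure.map X₀ ℙ = gaussianReal 0 1)
    (hlaw₁ : Measure.map X₁ ℙ = gaussianReal μ (⟨σ ^ 2, sq_nonneg σ⟩ : NNReal))
    (hindep : IndepFun X₀ X₁ ℙ)
    (w : ℝ) (hw : w = (t * σ ^ 2 + t - 1) / ((1 - t) ^ 2 + t ^ 2 * σ ^ 2))
    (v : ℝ → ℝ)
    (hv : ∀ y, v y = w * y + (1 - t) * μ / ((1 - t) ^ 2 + t ^ 2 * σ ^ 2))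
    (X : Ω → ℝ) (hX : ∀ ω, X ω = (1 - t) * X₀ ω + t * X₁ ω) :
    variance (fun ω => X₁ ω - (X ω - t * X₁ ω) / (1 - t) - v (X ω)) ℙ =
      (1 + w * (1 - t)) ^ 2 * variance X₀ ℙ +
        (1 - t * w) ^ 2 * variance X₁ ℙ ∧
    variance (fun ω => X₁ ω - (X ω - t * X₁ ω) / (1 - t) - v (X ω)) ℙ =
      (1 + w * (1 - t)) ^ 2 + (1 - t * w) ^ 2 * σ ^ 2 :=
  cfm_update_variance_gaussian_pair_general t μ σ ht X₀ X₁ hX₀ hX₁ hlaw₀ hlaw₁ hindep w v hv X hX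
end
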